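/- arXiv:2308.13020 — 5 statements merged into one kernel-verified Lean document; each statement's English description precedes it below -/
import Mathlib

section
/- For every l with 0 ≤ l ≤ M−1, Tr(ρ_c · O_l) = c_l/α²; furthermore Tr(ρ_c · O_α) = 1/α². -/
open Matrix Kronecker

/-- The maximally entangled state `Φ_d = (1/√d) ∑ i, e_i ⊗ e_i` on `ℂ^d ⊗ ℂ^d`. -/
noncomputable def Phi (d : ℕ) : Fin d × Fin d → ℂ :=
  fun p => if p.1 = p.2 then ((1 / Real.sqrt d : ℝ) : ℂ) else 0

/-- Tensor product `v ⊗ e_b` of a vector `v : ι → ℂ` with the standard basis vector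
`e_b` of `ℂ²`. -/
def vecTens {ι : Type*} (v : ι → ℂ) (b : Fin 2) : ι × Fin 2 → ℂ :=
  fun q => v q.1 * (if q.2 = b then 1 else 0)

/-!
Both decoding operators have the rank-one form `O = |u ⊗ e_r⟩⟨Φ_d ⊗ e_1|`, so
`Tr(ρ_c O) = ⟨ψ_c, u ⊗ e_r⟩ ⟨Φ_d ⊗ e_1, ψ_c⟩`. The second factor is `1/α`. The first is `1/α`
times an overlap `⟨(A ⊗ I)Φ_d, (B ⊗ I)Φ_d⟩ = Tr(A† B)/d`, which is `Tr(H H_l)/d = c_l` for `O_l`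
(as `H` is Hermitian and the `H_m` are orthonormal) and `Tr(I)/d = 1` for `O_α`.
-/

section vecTens

variable {ι : Type*}

lemma star_vecTens (v : ι → ℂ) (b : Fin 2) : star (vecTens v b) = vecTens (star v) b := by
  ext q; by_cases h : q.2 = b <;> simp [vecTens, h]

lemma vecTens_dotProduct_vecTens [Fintype ι] (v w : ι → ℂ) (a b : Fin 2) :
    vecTens v a ⬝ᵥ vecTens w b = if a = b then v ⬝ᵥ w else 0 := by
  fin_cases a <;> fin_cases b <;> simp [vecTens, dotProduct, Fintype.sum_prod_type]

lemma vecMulVec_kronecker_single (v w : ι → ℂ) (a b : Fin 2) :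
    vecMulVec v w ⊗ₖ single a b (1 : ℂ) = vecMulVec (vecTens v a) (vecTens w b) := by
  ext p q
  by_cases ha : p.2 = a <;> by_cases hb : q.2 = b <;>
    simp [vecTens, vecMulVec_apply, eq_comm (a := a), eq_comm (a := b), ha, hb]

end vecTens

lemma trace_vecMulVec_mul_vecMulVec {n R : Type*} [Fintype n] [CommSemiring R]
    (x y u w : n → R) :
    trace (vecMulVec x y * vecMulVec u w) = (y ⬝ᵥ u) * (w ⬝ᵥ x) := by
  rw [vecMulVec_mul_vecMulVec, trace_vecMulVec, dotProduct_smul, smul_eq_mul, dotProduct_comm x]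

lemma kronecker_one_mulVec_Phi {d : ℕ} (A : Matrix (Fin d) (Fin d) ℂ) :
    (A ⊗ₖ (1 : Matrix (Fin d) (Fin d) ℂ)) *ᵥ Phi d
      = fun p => A p.1 p.2 * (1 / Real.sqrt d : ℝ) := by
  funext p
  simp [mulVec, dotProduct, Phi, Fintype.sum_prod_type, one_apply]

lemma star_kronecker_one_mulVec_Phi_dotProduct {d : ℕ} (A B : Matrix (Fin d) (Fin d) ℂ) :
    star ((A ⊗ₖ (1 : Matrix (Fin d) (Fin d) ℂ)) *ᵥ Phi d) ⬝ᵥ ((B ⊗ₖ 1) *ᵥ Phi d)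
      = trace (Aᴴ * B) / d := by
  have hsq : ((1 / Real.sqrt d : ℝ) : ℂ) * ((1 / Real.sqrt d : ℝ) : ℂ) = 1 / d := by
    rw [← Complex.ofReal_mul, div_mul_div_comm, one_mul, Real.mul_self_sqrt d.cast_nonneg]
    push_cast; rfl
  simp only [kronecker_one_mulVec_Phi, dotProduct, trace, diag, mul_apply, Fintype.sum_prod_type,
    Pi.star_apply, star_mul', conjTranspose_apply, Complex.star_def, Complex.conj_ofReal]
  simp_rw [Finset.sum_div]
  rw [Finset.sum_comm]
  refine Finset.sum_congr rfl fun i _ => Finset.sum_congr rfl fun j _ => ?_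
  linear_combination (starRingEnd ℂ (A j i) * B j i) * hsq

lemma star_Phi_dotProduct_Phi {d : ℕ} (hd : 0 < d) : star (Phi d) ⬝ᵥ Phi d = 1 := by
  have h := star_kronecker_one_mulVec_Phi_dotProduct (1 : Matrix (Fin d) (Fin d) ℂ) 1
  rw [one_kronecker_one, one_mulVec] at h
  rw [h, conjTranspose_one, one_mul, trace_one, Fintype.card_fin]
  exact div_self (by exact_mod_cast hd.ne')

lemma trace_sum_smul_mul_div_of_orthonormal {ι n K : Type*} [Fintype ι] [DecidableEq ι]
    [Fintype n] [Field K] (Hm : ι → Matrix n n K) (s : K)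
    (hortho : ∀ j k, (Hm j * Hm k).trace / s = if j = k then 1 else 0) (c : ι → K) (l : ι) :
    ((∑ m, c m • Hm m) * Hm l).trace / s = c l := by
  simp only [Finset.sum_mul, trace_sum, smul_mul_assoc, trace_smul, smul_eq_mul, Finset.sum_div,
    mul_div_assoc, hortho, mul_ite, mul_one, mul_zero, Finset.sum_ite_eq', Finset.mem_univ, if_true]

lemma isHermitian_sum_ofReal_smul {ι n : Type*} [Fintype ι] (Hm : ι → Matrix n n ℂ)
    (hherm : ∀ m, (Hm m).IsHermitian) (c : ι → ℝ) : (∑ m, (c m : ℂ) • Hm m).IsHermitian :=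
  isSelfAdjoint_sum _ fun m _ => (hherm m).smul (Complex.conj_ofReal (c m))

theorem pseudoChoi_decoding_general (d M : ℕ) (hd : 0 < d)
    (Hm : Fin M → Matrix (Fin d) (Fin d) ℂ)
    (hherm : ∀ m, (Hm m).IsHermitian)
    (hortho : ∀ j k, (Hm j * Hm k).trace / (d : ℂ) = if j = k then 1 else 0)
    (c : Fin M → ℝ)
    (H : Matrix (Fin d) (Fin d) ℂ) (hH : H = ∑ m, (c m : ℂ) • Hm m)
    (α : ℝ)
    (ψ : (Fin d × Fin d) × Fin 2 → ℂ)
    (hψ : ψ = fun q =>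
      (vecTens ((H ⊗ₖ (1 : Matrix (Fin d) (Fin d) ℂ)).mulVec (Phi d)) 0 q
        + vecTens (Phi d) 1 q) / (α : ℂ))
    (ρc : Matrix ((Fin d × Fin d) × Fin 2) ((Fin d × Fin d) × Fin 2) ℂ)
    (hρ : ρc = Matrix.vecMulVec ψ (star ψ)) :
    (∀ l : Fin M,
      (ρc * (Matrix.vecMulVec ((Hm l ⊗ₖ (1 : Matrix (Fin d) (Fin d) ℂ)).mulVec (Phi d))
            (star (Phi d))
          ⊗ₖ Matrix.single (0 : Fin 2) (1 : Fin 2) (1 : ℂ))).trace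
        = (c l : ℂ) / (α : ℂ) ^ 2)
    ∧ (ρc * (Matrix.vecMulVec (Phi d) (star (Phi d))
          ⊗ₖ Matrix.single (1 : Fin 2) (1 : Fin 2) (1 : ℂ))).trace
        = 1 / (α : ℂ) ^ 2 := by
  set a := (H ⊗ₖ (1 : Matrix (Fin d) (Fin d) ℂ)) *ᵥ Phi d
  have hψ' : ψ = (α : ℂ)⁻¹ • (vecTens a 0 + vecTens (Phi d) 1) := by
    rw [hψ]; ext q; simp [div_eq_inv_mul]
  have hψstar : star ψ = (α : ℂ)⁻¹ • (vecTens (star a) 0 + vecTens (star (Phi d)) 1) := by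
    rw [hψ', star_smul, star_add, star_vecTens, star_vecTens, star_inv₀, Complex.star_def,
      Complex.conj_ofReal]
  have hΦ := star_Phi_dotProduct_Phi hd
  refine ⟨fun l => ?_, ?_⟩
  all_goals
    rw [hρ, vecMulVec_kronecker_single, trace_vecMulVec_mul_vecMulVec, hψstar, hψ']
    simp only [smul_dotProduct, dotProduct_smul, add_dotProduct, dotProduct_add,
      vecTens_dotProduct_vecTens, smul_eq_mul, if_true, zero_ne_one, one_ne_zero, if_false,
      add_zero, zero_add, hΦ]
  · have hHl : star a ⬝ᵥ ((Hm l ⊗ₖ 1) *ᵥ Phi d) = c l := by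
      rw [star_kronecker_one_mulVec_Phi_dotProduct, hH,
        (isHermitian_sum_ofReal_smul Hm hherm c).eq,
        trace_sum_smul_mul_div_of_orthonormal Hm _ hortho]
    rw [hHl]
    ring
  · ring

/-- for the pseudo-Choi state `ρ_c`,
`Tr(ρ_c · O_l) = c_l/α²` for every `l`, and `Tr(ρ_c · O_α) = 1/α²`. -/
theorem pseudoChoi_decoding (d M : ℕ) (hd : 0 < d) (hM : 0 < M)
    (Hm : Fin M → Matrix (Fin d) (Fin d) ℂ)
    (hherm : ∀ m, (Hm m).IsHermitian)
    (hunit : ∀ m, Hm m ∈ Matrix.unitaryGroup (Fin d) ℂ)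
    (hortho : ∀ j k, (Hm j * Hm k).trace / (d : ℂ) = if j = k then 1 else 0)
    (c : Fin M → ℝ)
    (H : Matrix (Fin d) (Fin d) ℂ) (hH : H = ∑ m, (c m : ℂ) • Hm m)
    (α : ℝ) (hα : α = Real.sqrt (∑ m, c m ^ 2 + 1))
    (ψ : (Fin d × Fin d) × Fin 2 → ℂ)
    (hψ : ψ = fun q =>
      (vecTens ((H ⊗ₖ (1 : Matrix (Fin d) (Fin d) ℂ)).mulVec (Phi d)) 0 q
        + vecTens (Phi d) 1 q) / (α : ℂ))
    (ρc : Matrix ((Fin d × Fin d) × Fin 2) ((Fin d × Fin d) × Fin 2) ℂ)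
    (hρ : ρc = Matrix.vecMulVec ψ (star ψ)) :
    (∀ l : Fin M,
      (ρc * (Matrix.vecMulVec ((Hm l ⊗ₖ (1 : Matrix (Fin d) (Fin d) ℂ)).mulVec (Phi d))
            (star (Phi d))
          ⊗ₖ Matrix.single (0 : Fin 2) (1 : Fin 2) (1 : ℂ))).trace
        = (c l : ℂ) / (α : ℂ) ^ 2)
    ∧ (ρc * (Matrix.vecMulVec (Phi d) (star (Phi d))
          ⊗ₖ Matrix.single (1 : Fin 2) (1 : Fin 2) (1 : ℂ))).trace
        = 1 / (α : ℂ) ^ 2 :=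
  pseudoChoi_decoding_general d M hd Hm hherm hortho c H hH α ψ hψ ρc hρ
end

section
/- For every l with 0 ≤ l ≤ M−1, Tr(ρ · O_l) = c_l/α², where O_l = (H_l ⊗ X)/2 and X is the Pauli-X matrix; furthermore Tr(ρ · O_α) = 1/α², where O_α = I ⊗ |1⟩⟨1|. -/
/-!
Since `tr (A ⊗ B) = tr A · tr B`, the trace of `ρ` against an observable `B ⊗ P` splits into
traces over the system and over the qubit. Against `X` only the two off-diagonal blocks
`H ⊗ |0⟩⟨1|` and `H ⊗ |1⟩⟨0|` of `ρ` survive, each contributing `tr (H H_l) = c_l d` by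
orthonormality; against `|1⟩⟨1|` only `I ⊗ |1⟩⟨1|` survives, contributing `tr I = d`.
-/

open Matrix Kronecker

namespace Matrix

variable {n p R : Type*} [Fintype n] [Fintype p] [DecidableEq p] [CommSemiring R]

theorem trace_kronecker_single_mul_kronecker_single (A B : Matrix n n R) (i j k l : p) :
    ((A ⊗ₖ single i j (1 : R)) * (B ⊗ₖ single k l 1)).trace
      = (A * B).trace * single k l 1 j i := by
  rw [← mul_kronecker_mul, trace_kronecker, trace_single_mul, smul_eq_mul, one_mul]

theorem trace_sum_smul_mul_of_orthogonal {ι : Type*} [Fintype ι] [DecidableEq ι]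
    (B : ι → Matrix n n R) (d : R) (hB : ∀ j k, (B j * B k).trace = if j = k then d else 0)
    (a : ι → R) (l : ι) : ((∑ m, a m • B m) * B l).trace = a l * d := by
  simp [Finset.sum_mul, trace_sum, hB]

end Matrix

theorem resourceState_decoding_general (d M : ℕ) (hd : 0 < d)
    (Hm : Fin M → Matrix (Fin d) (Fin d) ℂ)
    (hortho : ∀ j k, (Hm j * Hm k).trace / (d : ℂ) = if j = k then 1 else 0)
    (c : Fin M → ℝ)
    (H : Matrix (Fin d) (Fin d) ℂ) (hH : H = ∑ m, (c m : ℂ) • Hm m)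
    (α : ℝ)
    (ρ : Matrix (Fin d × Fin 2) (Fin d × Fin 2) ℂ)
    (hρ : ρ = ((d : ℂ) * (α : ℂ) ^ 2)⁻¹ •
      ((H * H) ⊗ₖ Matrix.single (0 : Fin 2) (0 : Fin 2) (1 : ℂ)
        + H ⊗ₖ Matrix.single (0 : Fin 2) (1 : Fin 2) (1 : ℂ)
        + H ⊗ₖ Matrix.single (1 : Fin 2) (0 : Fin 2) (1 : ℂ)
        + (1 : Matrix (Fin d) (Fin d) ℂ)
            ⊗ₖ Matrix.single (1 : Fin 2) (1 : Fin 2) (1 : ℂ))) :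
    (∀ l : Fin M,
      (ρ * ((2 : ℂ)⁻¹ • (Hm l ⊗ₖ
          (Matrix.single (0 : Fin 2) (1 : Fin 2) (1 : ℂ)
            + Matrix.single (1 : Fin 2) (0 : Fin 2) (1 : ℂ))))).trace
        = (c l : ℂ) / (α : ℂ) ^ 2)
    ∧ (ρ * ((1 : Matrix (Fin d) (Fin d) ℂ)
          ⊗ₖ Matrix.single (1 : Fin 2) (1 : Fin 2) (1 : ℂ))).trace
        = 1 / (α : ℂ) ^ 2 := by
  have hd₀ : (d : ℂ) ≠ 0 := by exact_mod_cast hd.ne'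
  have htrace (j k : Fin M) : (Hm j * Hm k).trace = if j = k then (d : ℂ) else 0 := by
    rw [(div_eq_iff hd₀).mp (hortho j k)]
    split_ifs <;> simp
  have hHHm (l : Fin M) : (H * Hm l).trace = c l * d := by
    rw [hH, trace_sum_smul_mul_of_orthogonal Hm d htrace]
  subst hρ
  refine ⟨fun l => ?_, ?_⟩
  · simp only [kronecker_add, Matrix.add_mul, Matrix.mul_add, Matrix.smul_mul, Matrix.mul_smul,
      trace_add, trace_smul, trace_kronecker_single_mul_kronecker_single, hHHm]
    simp
    field_simp
    ring
  · simp only [Matrix.add_mul, Matrix.smul_mul, trace_add, trace_smul,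
      trace_kronecker_single_mul_kronecker_single]
    simp
    field_simp

/-- for the resource state
`ρ = (1/(d·α²))·(H² ⊗ |0⟩⟨0| + H ⊗ |0⟩⟨1| + H ⊗ |1⟩⟨0| + I ⊗ |1⟩⟨1|)`,
`Tr(ρ · (H_l ⊗ X)/2) = c_l/α²` for every `l`, and `Tr(ρ · (I ⊗ |1⟩⟨1|)) = 1/α²`. -/
theorem resourceState_decoding (d M : ℕ) (hd : 0 < d) (hM : 0 < M)
    (Hm : Fin M → Matrix (Fin d) (Fin d) ℂ)
    (hherm : ∀ m, (Hm m).IsHermitian)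
    (hunit : ∀ m, Hm m ∈ Matrix.unitaryGroup (Fin d) ℂ)
    (hortho : ∀ j k, (Hm j * Hm k).trace / (d : ℂ) = if j = k then 1 else 0)
    (c : Fin M → ℝ)
    (H : Matrix (Fin d) (Fin d) ℂ) (hH : H = ∑ m, (c m : ℂ) • Hm m)
    (α : ℝ) (hα : α = Real.sqrt (∑ m, c m ^ 2 + 1))
    (ρ : Matrix (Fin d × Fin 2) (Fin d × Fin 2) ℂ)
    (hρ : ρ = ((d : ℂ) * (α : ℂ) ^ 2)⁻¹ •
      ((H * H) ⊗ₖ Matrix.single (0 : Fin 2) (0 : Fin 2) (1 : ℂ)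
        + H ⊗ₖ Matrix.single (0 : Fin 2) (1 : Fin 2) (1 : ℂ)
        + H ⊗ₖ Matrix.single (1 : Fin 2) (0 : Fin 2) (1 : ℂ)
        + (1 : Matrix (Fin d) (Fin d) ℂ)
            ⊗ₖ Matrix.single (1 : Fin 2) (1 : Fin 2) (1 : ℂ))) :
    (∀ l : Fin M,
      (ρ * ((2 : ℂ)⁻¹ • (Hm l ⊗ₖ
          (Matrix.single (0 : Fin 2) (1 : Fin 2) (1 : ℂ)
            + Matrix.single (1 : Fin 2) (0 : Fin 2) (1 : ℂ))))).trace
        = (c l : ℂ) / (α : ℂ) ^ 2)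
    ∧ (ρ * ((1 : Matrix (Fin d) (Fin d) ℂ)
          ⊗ₖ Matrix.single (1 : Fin 2) (1 : Fin 2) (1 : ℂ))).trace
        = 1 / (α : ℂ) ^ 2 :=
  resourceState_decoding_general d M hd Hm hortho c H hH α ρ hρ
end

section
/- Let P = I₂ ⊗ |0⟩⟨0| ⊗ I_{d²} be the projector onto the |0⟩ state of the block-encoding register. Then ‖P·ψ₂‖² = ‖c̃‖₂²/(2Δ²) + 1/2, and the normalized projected state P·ψ₂/‖P·ψ₂‖ equals (1/γ)·( e₀ ⊗ e₀ ⊗ ((H̃/Δ) ⊗ I)Φ_d + e₁ ⊗ e₀ ⊗ Φ_d ), where γ = √(‖c̃‖₂²/Δ² + 1); i.e., up to the factored-out block-encoding qubit, the projected state is the pseudo-Choi state of H̃/Δ. -/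
/-!
The projector keeps only the `|0⟩_B` components of `ψ₂`, so `P ψ₂ = (1/√2)(|0⟩|0⟩ w₀ + |1⟩|0⟩ Φ_d)`
with `w₀ = ((H̃/Δ) ⊗ I) Φ_d`. Since `((A ⊗ I) Φ_d)_{ij} = A_{ij}/√d`, the squared norm of `(A ⊗ I) Φ_d`
is `‖A‖_F²/d`, and orthonormality of the `H_m` gives `‖H̃‖_F² = d ‖c̃‖²`; hence the two branches have
squared norms `‖c̃‖²/Δ²` and `1`, and normalizing cancels the amplitude `1/√2`.
-/

open Matrix Kronecker

lemma kroneckerMap_one_mulVec_Phi {d : ℕ} (A : Matrix (Fin d) (Fin d) ℂ) (p : Fin d × Fin d) :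
    ((A ⊗ₖ (1 : Matrix (Fin d) (Fin d) ℂ)) *ᵥ Phi d) p = A p.1 p.2 * ((1 / √d : ℝ) : ℂ) := by
  obtain ⟨i, j⟩ := p
  simp [mulVec, dotProduct, kroneckerMap_apply, Phi, one_apply, Fintype.sum_prod_type]

lemma sum_normSq_kroneckerMap_one_mulVec_Phi {d : ℕ} (A : Matrix (Fin d) (Fin d) ℂ) :
    ∑ p, Complex.normSq (((A ⊗ₖ (1 : Matrix (Fin d) (Fin d) ℂ)) *ᵥ Phi d) p)
      = (∑ p : Fin d × Fin d, Complex.normSq (A p.1 p.2)) / d := by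
  have h : (1 / √d) * (1 / √d) = 1 / (d : ℝ) := by
    rw [div_mul_div_comm, one_mul, Real.mul_self_sqrt d.cast_nonneg]
  simp only [kroneckerMap_one_mulVec_Phi, Complex.normSq_mul, Complex.normSq_ofReal, h,
    mul_one_div, Finset.sum_div]

lemma sum_normSq_Phi {d : ℕ} (hd : 0 < d) : ∑ p, Complex.normSq (Phi d p) = 1 := by
  have h := sum_normSq_kroneckerMap_one_mulVec_Phi (1 : Matrix (Fin d) (Fin d) ℂ)
  rw [one_kronecker_one, one_mulVec] at h
  rw [h, Fintype.sum_prod_type]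
  simp [one_apply, hd.ne']

lemma sum_normSq_apply_eq_trace {m n : Type*} [Fintype m] [Fintype n] (A : Matrix m n ℂ) :
    ((∑ p : m × n, Complex.normSq (A p.1 p.2) : ℝ) : ℂ) = (Aᴴ * A).trace := by
  simp only [Fintype.sum_prod_type, Complex.ofReal_sum, Complex.normSq_eq_conj_mul_self, trace,
    diag_apply, Matrix.mul_apply, conjTranspose_apply, RCLike.star_def]
  exact Finset.sum_comm

lemma sum_normSq_apply_sum_smul {m n ι : Type*} [Fintype m] [Fintype n] [Fintype ι]
    [DecidableEq ι] (H : ι → Matrix m n ℂ) (r : ℝ)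
    (horth : ∀ j k, ((H j)ᴴ * H k).trace = if j = k then (r : ℂ) else 0) (c : ι → ℂ) :
    ∑ p : m × n, Complex.normSq ((∑ i, c i • H i) p.1 p.2) = r * ∑ i, Complex.normSq (c i) := by
  apply Complex.ofReal_injective
  rw [sum_normSq_apply_eq_trace, conjTranspose_sum, Matrix.sum_mul]
  simp only [conjTranspose_smul, RCLike.star_def, Matrix.mul_sum, Matrix.mul_smul, smul_mul,
    trace_sum, trace_smul, horth, smul_eq_mul, mul_ite, mul_zero, Finset.sum_ite_eq,
    Finset.mem_univ, if_true, Finset.mul_sum, Complex.ofReal_sum, Complex.ofReal_mul,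
    Complex.normSq_eq_conj_mul_self]
  exact Finset.sum_congr rfl fun _ _ => by ring

lemma one_kronecker_single_kronecker_one_mulVec {R α β γ : Type*} [Semiring R]
    [Fintype α] [Fintype β] [Fintype γ] [DecidableEq α] [DecidableEq β] [DecidableEq γ]
    (i : β) (u : α × β × γ → R) :
    ((1 : Matrix α α R) ⊗ₖ (single i i (1 : R) ⊗ₖ (1 : Matrix γ γ R))) *ᵥ u
      = fun q => if q.2.1 = i then u q else 0 := by
  ext ⟨a, b, c⟩
  by_cases h : b = i
  · subst h
    simp [mulVec, dotProduct, kroneckerMap_apply, one_apply, single_apply, Fintype.sum_prod_type]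
  · simp [mulVec, dotProduct, kroneckerMap_apply, h, Ne.symm h]

lemma inv_ofReal_sqrt_sq_mul_mul {c : ℝ} (hc : 0 < c) (N : ℝ) (z : ℂ) :
    ((√(c ^ 2 * N) : ℝ) : ℂ)⁻¹ * (c * z) = ((√N : ℝ) : ℂ)⁻¹ * z := by
  rw [Real.sqrt_mul (sq_nonneg c), Real.sqrt_sq hc.le, Complex.ofReal_mul, mul_inv,
    mul_mul_mul_comm, inv_mul_cancel₀ (by exact_mod_cast hc.ne'), one_mul]

/-- The state `|0⟩_C |0⟩_B x + |1⟩_C |0⟩_B y`. -/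
noncomputable def controlBranches {κ : Type*} (x y : κ → ℂ) : Fin 2 × Fin 2 × κ → ℂ :=
  fun q => (if q.1 = 0 then 1 else 0) * (if q.2.1 = 0 then 1 else 0) * x q.2.2
    + (if q.1 = 1 then 1 else 0) * (if q.2.1 = 0 then 1 else 0) * y q.2.2

lemma sum_normSq_controlBranches {κ : Type*} [Fintype κ] (x y : κ → ℂ) :
    ∑ q, Complex.normSq (controlBranches x y q)
      = ∑ p, Complex.normSq (x p) + ∑ p, Complex.normSq (y p) := by
  simp [controlBranches, Fintype.sum_prod_type, Fin.sum_univ_two]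

theorem projected_state_is_pseudoChoi_general (d M : ℕ) (hd : 0 < d)
    (Hm : Fin M → Matrix (Fin d) (Fin d) ℂ)
    (hherm : ∀ m, (Hm m).IsHermitian)
    (hortho : ∀ j k, (Hm j * Hm k).trace / (d : ℂ) = if j = k then 1 else 0)
    (ctil : Fin M → ℂ) (Δ : ℝ)
    (J : Matrix (Fin d) (Fin d) ℂ)
    (Htil : Matrix (Fin d) (Fin d) ℂ) (hHtil : Htil = ∑ m, ctil m • Hm m)
    (w0 : Fin d × Fin d → ℂ)
    (hw0 : w0 = (((Δ : ℂ)⁻¹ • Htil) ⊗ₖ (1 : Matrix (Fin d) (Fin d) ℂ)).mulVec (Phi d))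
    (ψ₂ : Fin 2 × Fin 2 × (Fin d × Fin d) → ℂ)
    (hψ₂ : ψ₂ = fun q => ((1 / Real.sqrt 2 : ℝ) : ℂ) *
      ((if q.1 = 0 then 1 else 0) * (if q.2.1 = 0 then 1 else 0) * w0 q.2.2
        + (if q.1 = 0 then 1 else 0) * (if q.2.1 = 1 then 1 else 0)
            * ((J ⊗ₖ (1 : Matrix (Fin d) (Fin d) ℂ)).mulVec (Phi d)) q.2.2
        + (if q.1 = 1 then 1 else 0) * (if q.2.1 = 0 then 1 else 0) * Phi d q.2.2))
    (P : Matrix (Fin 2 × Fin 2 × (Fin d × Fin d)) (Fin 2 × Fin 2 × (Fin d × Fin d)) ℂ)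
    (hP : P = (1 : Matrix (Fin 2) (Fin 2) ℂ)
      ⊗ₖ (Matrix.single (0 : Fin 2) (0 : Fin 2) (1 : ℂ)
        ⊗ₖ (1 : Matrix (Fin d × Fin d) (Fin d × Fin d) ℂ))) :
    (∑ q, Complex.normSq (P.mulVec ψ₂ q))
        = (∑ m, Complex.normSq (ctil m)) / (2 * Δ ^ 2) + 1 / 2
    ∧ (fun q => ((Real.sqrt (∑ q', Complex.normSq (P.mulVec ψ₂ q')) : ℝ) : ℂ)⁻¹
          * P.mulVec ψ₂ q)
        = fun q : Fin 2 × Fin 2 × (Fin d × Fin d) =>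
          ((Real.sqrt ((∑ m, Complex.normSq (ctil m)) / Δ ^ 2 + 1) : ℝ) : ℂ)⁻¹
            * ((if q.1 = 0 then 1 else 0) * (if q.2.1 = 0 then 1 else 0) * w0 q.2.2
              + (if q.1 = 1 then 1 else 0) * (if q.2.1 = 0 then 1 else 0) * Phi d q.2.2) := by
  have hd' : (d : ℂ) ≠ 0 := by exact_mod_cast hd.ne'
  have horth : ∀ j k, ((Hm j)ᴴ * Hm k).trace = if j = k then ((d : ℝ) : ℂ) else 0 := by
    intro j k
    rw [(hherm j).eq, (div_eq_iff hd').mp (hortho j k)]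
    split_ifs <;> simp
  have hw0_norm : ∑ p, Complex.normSq (w0 p) = (∑ m, Complex.normSq (ctil m)) / Δ ^ 2 := by
    simp only [hw0, sum_normSq_kroneckerMap_one_mulVec_Phi, hHtil, Finset.smul_sum, smul_smul,
      sum_normSq_apply_sum_smul Hm d horth, Complex.normSq_mul, Complex.normSq_inv,
      Complex.normSq_ofReal, ← Finset.mul_sum]
    field_simp
  have hproj : P *ᵥ ψ₂ = fun q => ((1 / √2 : ℝ) : ℂ) * controlBranches w0 (Phi d) q := by
    rw [hP, one_kronecker_single_kronecker_one_mulVec, hψ₂]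
    ext ⟨a, b, p⟩
    fin_cases b <;> simp [controlBranches]
  have hnorm : ∑ q, Complex.normSq ((P *ᵥ ψ₂) q)
      = (1 / √2) ^ 2 * ((∑ m, Complex.normSq (ctil m)) / Δ ^ 2 + 1) := by
    simp only [hproj, Complex.normSq_mul, Complex.normSq_ofReal, ← Finset.mul_sum,
      sum_normSq_controlBranches, hw0_norm, sum_normSq_Phi hd, sq]
  refine ⟨?_, ?_⟩
  · rw [hnorm, div_pow, Real.sq_sqrt zero_le_two]
    ring
  · rw [hnorm, hproj]
    exact funext fun q => inv_ofReal_sqrt_sq_mul_mul (by positivity) _ _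

/-- projecting the post-circuit state `ψ₂` onto `|0⟩` of the block-encoding
register gives `‖P·ψ₂‖² = ‖c̃‖₂²/(2Δ²) + 1/2`, and the normalized projected state is the
pseudo-Choi state of `H̃/Δ` (with the block-encoding qubit factored out in `|0⟩`). -/
theorem projected_state_is_pseudoChoi (d M : ℕ) (hd : 0 < d) (hM : 0 < M)
    (Hm : Fin M → Matrix (Fin d) (Fin d) ℂ)
    (hherm : ∀ m, (Hm m).IsHermitian)
    (hunit : ∀ m, Hm m ∈ Matrix.unitaryGroup (Fin d) ℂ)
    (hortho : ∀ j k, (Hm j * Hm k).trace / (d : ℂ) = if j = k then 1 else 0)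
    (ctil : Fin M → ℂ) (Δ : ℝ) (hΔ : 0 < Δ)
    (J : Matrix (Fin d) (Fin d) ℂ)
    (Htil : Matrix (Fin d) (Fin d) ℂ) (hHtil : Htil = ∑ m, ctil m • Hm m)
    (w0 : Fin d × Fin d → ℂ)
    (hw0 : w0 = (((Δ : ℂ)⁻¹ • Htil) ⊗ₖ (1 : Matrix (Fin d) (Fin d) ℂ)).mulVec (Phi d))
    (ψ₂ : Fin 2 × Fin 2 × (Fin d × Fin d) → ℂ)
    (hψ₂ : ψ₂ = fun q => ((1 / Real.sqrt 2 : ℝ) : ℂ) *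
      ((if q.1 = 0 then 1 else 0) * (if q.2.1 = 0 then 1 else 0) * w0 q.2.2
        + (if q.1 = 0 then 1 else 0) * (if q.2.1 = 1 then 1 else 0)
            * ((J ⊗ₖ (1 : Matrix (Fin d) (Fin d) ℂ)).mulVec (Phi d)) q.2.2
        + (if q.1 = 1 then 1 else 0) * (if q.2.1 = 0 then 1 else 0) * Phi d q.2.2))
    (P : Matrix (Fin 2 × Fin 2 × (Fin d × Fin d)) (Fin 2 × Fin 2 × (Fin d × Fin d)) ℂ)
    (hP : P = (1 : Matrix (Fin 2) (Fin 2) ℂ)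
      ⊗ₖ (Matrix.single (0 : Fin 2) (0 : Fin 2) (1 : ℂ)
        ⊗ₖ (1 : Matrix (Fin d × Fin d) (Fin d × Fin d) ℂ))) :
    (∑ q, Complex.normSq (P.mulVec ψ₂ q))
        = (∑ m, Complex.normSq (ctil m)) / (2 * Δ ^ 2) + 1 / 2
    ∧ (fun q => ((Real.sqrt (∑ q', Complex.normSq (P.mulVec ψ₂ q')) : ℝ) : ℂ)⁻¹
          * P.mulVec ψ₂ q)
        = fun q : Fin 2 × Fin 2 × (Fin d × Fin d) =>
          ((Real.sqrt ((∑ m, Complex.normSq (ctil m)) / Δ ^ 2 + 1) : ℝ) : ℂ)⁻¹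
            * ((if q.1 = 0 then 1 else 0) * (if q.2.1 = 0 then 1 else 0) * w0 q.2.2
              + (if q.1 = 1 then 1 else 0) * (if q.2.1 = 0 then 1 else 0) * Phi d q.2.2) :=
  projected_state_is_pseudoChoi_general d M hd Hm hherm hortho ctil Δ J Htil hHtil w0 hw0 ψ₂ hψ₂ P
    hP
end

section
/- Suppose ‖H̃·t − H·t‖ ≤ ε_b, where ‖·‖ is the spectral norm, t > 0, and ε_b ≥ 0. Then the coefficient vectors satisfy ‖c̃ − c‖₂ ≤ √M · ε_b / t. -/
open Matrix Kronecker

/-- The spectral (ℓ²→ℓ²) operator norm of a complex square matrix. -/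
noncomputable def specNorm {d : ℕ} (A : Matrix (Fin d) (Fin d) ℂ) : ℝ :=
  ‖Matrix.toEuclideanCLM (𝕜 := ℂ) A‖

section Aux

open scoped Matrix.Norms.L2Operator

/-- Each entry of a matrix is bounded by its `ℓ²→ℓ²` operator norm. -/
lemma entry_le_l2_opNorm {d : ℕ} (A : Matrix (Fin d) (Fin d) ℂ) (i j : Fin d) :
    ‖A i j‖ ≤ ‖A‖ := by
  have h := A.l2_opNorm_mulVec (EuclideanSpace.single j 1)
  rw [EuclideanSpace.norm_single, norm_one, mul_one] at h
  refine le_trans ?_ h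
  set v : EuclideanSpace ℂ (Fin d) := (EuclideanSpace.equiv (Fin d) ℂ).symm
      (A *ᵥ (EuclideanSpace.single j 1)) with hv
  have hvi : v i = A i j := by
    show (A *ᵥ fun k => (EuclideanSpace.single j 1 : EuclideanSpace ℂ (Fin d)) k) i = A i j
    simp [Matrix.mulVec, dotProduct, EuclideanSpace.single_apply]
  calc ‖A i j‖ = Real.sqrt (‖v i‖ ^ 2) := by
        rw [hvi, Real.sqrt_sq (norm_nonneg _)]
    _ ≤ Real.sqrt (∑ k, ‖v k‖ ^ 2) := by
        apply Real.sqrt_le_sqrt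
        exact Finset.single_le_sum (f := fun k => ‖v k‖ ^ 2)
          (fun k _ => sq_nonneg _) (Finset.mem_univ i)
    _ = ‖v‖ := (EuclideanSpace.norm_eq v).symm

/-- The trace of a `d × d` matrix is bounded by `d` times its operator norm. -/
lemma trace_le_l2_opNorm {d : ℕ} (A : Matrix (Fin d) (Fin d) ℂ) :
    ‖A.trace‖ ≤ d * ‖A‖ := by
  calc ‖A.trace‖ ≤ ∑ i, ‖A i i‖ := norm_sum_le _ _
    _ ≤ ∑ _i : Fin d, ‖A‖ := Finset.sum_le_sum fun i _ => entry_le_l2_opNorm A i i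
    _ = d * ‖A‖ := by simp [mul_comm]

lemma specNorm_smul {d : ℕ} (z : ℂ) (A : Matrix (Fin d) (Fin d) ℂ) :
    specNorm (z • A) = ‖z‖ * specNorm A := by
  rw [show specNorm (z • A) = ‖z • A‖ from rfl, show specNorm A = ‖A‖ from rfl, norm_smul]

/-- Key coefficient bound: if `(Δ * U).trace = z * d` with `U` unitary, then
    `‖z‖ ≤ specNorm Δ`. -/
lemma coeff_le_specNorm {d : ℕ} (hd : 0 < d) (Δ U : Matrix (Fin d) (Fin d) ℂ)
    (hU : U ∈ Matrix.unitaryGroup (Fin d) ℂ) (z : ℂ)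
    (htr : (Δ * U).trace = z * d) : ‖z‖ ≤ specNorm Δ := by
  haveI : Nonempty (Fin d) := ⟨⟨0, hd⟩⟩
  have h1 : ‖(Δ * U).trace‖ ≤ d * ‖Δ * U‖ := trace_le_l2_opNorm _
  have h2 : ‖Δ * U‖ = ‖Δ‖ := CStarRing.norm_mul_mem_unitary Δ hU
  have hd' : (0 : ℝ) < d := Nat.cast_pos.mpr hd
  have h3 : ‖z‖ * d ≤ d * ‖Δ‖ := by
    calc ‖z‖ * d = ‖z * (d : ℂ)‖ := by
          rw [norm_mul]; simp
      _ = ‖(Δ * U).trace‖ := by rw [htr]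
      _ ≤ d * ‖Δ * U‖ := h1
      _ = d * ‖Δ‖ := by rw [h2]
  have : ‖z‖ ≤ ‖Δ‖ := by
    rw [mul_comm (d : ℝ) ‖Δ‖] at h3
    exact le_of_mul_le_mul_right h3 hd'
  exact this

end Aux

/-- if `‖H̃·t − H·t‖ ≤ ε_b` then `‖c̃ − c‖₂ ≤ √M·ε_b/t`. -/
theorem coefficient_error_bound (d M : ℕ) (hd : 0 < d) (hM : 0 < M)
    (Hm : Fin M → Matrix (Fin d) (Fin d) ℂ)
    (hherm : ∀ m, (Hm m).IsHermitian)
    (hunit : ∀ m, Hm m ∈ Matrix.unitaryGroup (Fin d) ℂ)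
    (hortho : ∀ j k, (Hm j * Hm k).trace / (d : ℂ) = if j = k then 1 else 0)
    (c : Fin M → ℝ) (ctil : Fin M → ℂ)
    (H : Matrix (Fin d) (Fin d) ℂ) (hH : H = ∑ m, (c m : ℂ) • Hm m)
    (Htil : Matrix (Fin d) (Fin d) ℂ) (hHtil : Htil = ∑ m, ctil m • Hm m)
    (t εb : ℝ) (ht : 0 < t) (hεb : 0 ≤ εb)
    (hclose : specNorm ((t : ℂ) • Htil - (t : ℂ) • H) ≤ εb) :
    Real.sqrt (∑ m, Complex.normSq (ctil m - (c m : ℂ)))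
      ≤ Real.sqrt M * εb / t := by
  set δ : Fin M → ℂ := fun m => ctil m - (c m : ℂ) with hδ
  set Δ : Matrix (Fin d) (Fin d) ℂ := Htil - H with hΔ
  have hdne : (d : ℂ) ≠ 0 := Nat.cast_ne_zero.mpr hd.ne'
  -- orthogonality in unnormalized form
  have htr : ∀ j k, (Hm j * Hm k).trace = if j = k then (d : ℂ) else 0 := by
    intro j k
    have := hortho j k
    field_simp at this
    rcases eq_or_ne j k with h | h
    · simpa [h] using this
    · simpa [h] using this
  -- Δ expands as a sum
  have hΔsum : Δ = ∑ m, δ m • Hm m := by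
    rw [hΔ, hHtil, hH, ← Finset.sum_sub_distrib]
    congr 1; ext m : 1
    rw [hδ, sub_smul]
  -- trace formula
  have htrΔ : ∀ k, (Δ * Hm k).trace = δ k * d := by
    intro k
    rw [hΔsum, Finset.sum_mul, Matrix.trace_sum]
    have : ∀ m, ((δ m • Hm m) * Hm k).trace = δ m * (if m = k then (d : ℂ) else 0) := by
      intro m
      rw [Matrix.smul_mul, Matrix.trace_smul, htr m k, smul_eq_mul]
    simp only [this, mul_ite, mul_zero]
    simp
  -- specNorm Δ ≤ εb / t
  have htΔ : (t : ℂ) • Htil - (t : ℂ) • H = (t : ℂ) • Δ := by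
    rw [hΔ, smul_sub]
  have hspec : specNorm Δ ≤ εb / t := by
    have h1 : specNorm ((t : ℂ) • Δ) = t * specNorm Δ := by
      rw [specNorm_smul]
      congr 1
      simp [abs_of_pos ht]
    rw [htΔ, h1] at hclose
    rw [le_div_iff₀ ht, mul_comm]
    exact hclose
  -- each coefficient bound
  have hcoef : ∀ k, ‖δ k‖ ≤ εb / t := fun k =>
    le_trans (coeff_le_specNorm hd Δ (Hm k) (hunit k) (δ k) (htrΔ k)) hspec
  -- sum up
  have hsum : (∑ m, Complex.normSq (δ m)) ≤ M * (εb / t) ^ 2 := by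
    calc (∑ m, Complex.normSq (δ m)) ≤ ∑ _m : Fin M, (εb / t) ^ 2 := by
          apply Finset.sum_le_sum
          intro m _
          rw [Complex.normSq_eq_norm_sq]
          exact pow_le_pow_left₀ (norm_nonneg _) (hcoef m) 2
      _ = M * (εb / t) ^ 2 := by simp [mul_comm]
  calc Real.sqrt (∑ m, Complex.normSq (δ m)) ≤ Real.sqrt (M * (εb / t) ^ 2) :=
        Real.sqrt_le_sqrt hsum
    _ = Real.sqrt M * (εb / t) := by
        rw [Real.sqrt_mul (Nat.cast_nonneg M), Real.sqrt_sq (div_nonneg hεb ht.le)]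
    _ = Real.sqrt M * εb / t := by ring
end

section
/- For every l with 0 ≤ l ≤ M−1, Tr(ρ̃ · O_l) = Re(c̃_l)/(Δ·γ²), where O_l = (H_l ⊗ X)/2 and X is the Pauli-X matrix. -/
open Matrix Kronecker

/-!
Only the off-diagonal blocks `H̃/Δ` and `H̃†/Δ` of `ρ̃` survive pairing with `H_l ⊗ X`, since
`Tr(|i⟩⟨j| X) = X j i` vanishes on the diagonal. Orthonormality of the `H_m` then gives
`Tr(H̃ H_l) = d c̃_l` and, as the `H_m` are Hermitian, `Tr(H̃† H_l) = d conj(c̃_l)`; the two add up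
to `2 d Re c̃_l`.
-/

theorem Matrix.trace_kronecker_single_mul_kronecker {R n p : Type*} [CommSemiring R] [Fintype n]
    [Fintype p] [DecidableEq p] (A B : Matrix n n R) (i j : p) (c : R) (N : Matrix p p R) :
    ((A ⊗ₖ single i j c) * (B ⊗ₖ N)).trace = c * N j i * (A * B).trace := by
  rw [← mul_kronecker_mul, trace_kronecker, trace_single_mul, smul_eq_mul, mul_comm]

theorem Matrix.trace_sum_smul_mul_of_orthogonal_s13 {R ι n : Type*} [CommSemiring R] [Fintype ι]
    [DecidableEq ι] [Fintype n] {H : ι → Matrix n n R} {d : R}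
    (horth : ∀ j k, (H j * H k).trace = if j = k then d else 0) (c : ι → R) (l : ι) :
    ((∑ m, c m • H m) * H l).trace = c l * d := by
  simp [Finset.sum_mul, trace_sum, smul_mul_assoc, trace_smul, horth]

theorem Matrix.conjTranspose_sum_smul_of_isHermitian {R ι n : Type*} [CommSemiring R] [StarRing R]
    [Fintype ι] {H : ι → Matrix n n R} (hH : ∀ m, (H m).IsHermitian) (c : ι → R) :
    (∑ m, c m • H m)ᴴ = ∑ m, star (c m) • H m := by
  simp only [conjTranspose_sum, conjTranspose_smul, fun m => (hH m).eq]

theorem blockEncoded_resourceState_decoding_general (d M : ℕ) (hd : 0 < d)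
    (Hm : Fin M → Matrix (Fin d) (Fin d) ℂ)
    (hherm : ∀ m, (Hm m).IsHermitian)
    (hortho : ∀ j k, (Hm j * Hm k).trace / (d : ℂ) = if j = k then 1 else 0)
    (ctil : Fin M → ℂ) (Δ : ℝ)
    (Htil : Matrix (Fin d) (Fin d) ℂ) (hHtil : Htil = ∑ m, ctil m • Hm m)
    (γsq : ℝ)
    (ρtil : Matrix (Fin d × Fin 2) (Fin d × Fin 2) ℂ)
    (hρ : ρtil = ((d : ℂ) * (γsq : ℂ))⁻¹ •
      ((((Δ : ℂ) ^ 2)⁻¹ • (Htilᴴ * Htil))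
          ⊗ₖ Matrix.single (0 : Fin 2) (0 : Fin 2) (1 : ℂ)
        + ((Δ : ℂ)⁻¹ • Htil) ⊗ₖ Matrix.single (0 : Fin 2) (1 : Fin 2) (1 : ℂ)
        + ((Δ : ℂ)⁻¹ • Htilᴴ) ⊗ₖ Matrix.single (1 : Fin 2) (0 : Fin 2) (1 : ℂ)
        + (1 : Matrix (Fin d) (Fin d) ℂ)
            ⊗ₖ Matrix.single (1 : Fin 2) (1 : Fin 2) (1 : ℂ))) :
    ∀ l : Fin M,
      (ρtil * ((2 : ℂ)⁻¹ • (Hm l ⊗ₖ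
          (Matrix.single (0 : Fin 2) (1 : Fin 2) (1 : ℂ)
            + Matrix.single (1 : Fin 2) (0 : Fin 2) (1 : ℂ))))).trace
        = (((ctil l).re : ℝ) : ℂ) / ((Δ : ℂ) * (γsq : ℂ)) := by
  intro l
  have hd0 : (d : ℂ) ≠ 0 := Nat.cast_ne_zero.mpr hd.ne'
  have horth : ∀ j k, (Hm j * Hm k).trace = if j = k then (d : ℂ) else 0 := fun j k => by
    rw [(div_eq_iff hd0).mp (hortho j k)]
    split_ifs <;> simp
  have hHtil_l : (Htil * Hm l).trace = ctil l * d := by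
    rw [hHtil, trace_sum_smul_mul_of_orthogonal_s13 horth]
  have hHtilH_l : (Htilᴴ * Hm l).trace = star (ctil l) * d := by
    rw [hHtil, conjTranspose_sum_smul_of_isHermitian hherm, trace_sum_smul_mul_of_orthogonal_s13 horth]
  subst hρ
  simp only [Matrix.smul_mul, Matrix.mul_smul, Matrix.add_mul, trace_smul, trace_add,
    smul_kronecker, trace_kronecker_single_mul_kronecker, hHtil_l, hHtilH_l, Matrix.add_apply,
    single_apply_same, single_apply_of_ne, zero_ne_one, one_ne_zero, and_false, false_and,
    not_false_eq_true, smul_eq_mul, RCLike.star_def]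
  rw [Complex.re_eq_add_conj]
  linear_combination (2⁻¹ * (γsq : ℂ)⁻¹ * (Δ : ℂ)⁻¹ * (ctil l + starRingEnd ℂ (ctil l))) *
    inv_mul_cancel₀ hd0

/-- for the resource state `ρ̃` built from the block-encoded Hamiltonian
`H̃/Δ`, `Tr(ρ̃·O_l) = Re(c̃_l)/(Δ·γ²)` with `O_l = (H_l ⊗ X)/2`. -/
theorem blockEncoded_resourceState_decoding (d M : ℕ) (hd : 0 < d) (hM : 0 < M)
    (Hm : Fin M → Matrix (Fin d) (Fin d) ℂ)
    (hherm : ∀ m, (Hm m).IsHermitian)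
    (hunit : ∀ m, Hm m ∈ Matrix.unitaryGroup (Fin d) ℂ)
    (hortho : ∀ j k, (Hm j * Hm k).trace / (d : ℂ) = if j = k then 1 else 0)
    (ctil : Fin M → ℂ) (Δ : ℝ) (hΔ : 0 < Δ)
    (Htil : Matrix (Fin d) (Fin d) ℂ) (hHtil : Htil = ∑ m, ctil m • Hm m)
    (γsq : ℝ) (hγsq : γsq = (∑ m, Complex.normSq (ctil m)) / Δ ^ 2 + 1)
    (ρtil : Matrix (Fin d × Fin 2) (Fin d × Fin 2) ℂ)
    (hρ : ρtil = ((d : ℂ) * (γsq : ℂ))⁻¹ •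
      ((((Δ : ℂ) ^ 2)⁻¹ • (Htilᴴ * Htil))
          ⊗ₖ Matrix.single (0 : Fin 2) (0 : Fin 2) (1 : ℂ)
        + ((Δ : ℂ)⁻¹ • Htil) ⊗ₖ Matrix.single (0 : Fin 2) (1 : Fin 2) (1 : ℂ)
        + ((Δ : ℂ)⁻¹ • Htilᴴ) ⊗ₖ Matrix.single (1 : Fin 2) (0 : Fin 2) (1 : ℂ)
        + (1 : Matrix (Fin d) (Fin d) ℂ)
            ⊗ₖ Matrix.single (1 : Fin 2) (1 : Fin 2) (1 : ℂ))) :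
    ∀ l : Fin M,
      (ρtil * ((2 : ℂ)⁻¹ • (Hm l ⊗ₖ
          (Matrix.single (0 : Fin 2) (1 : Fin 2) (1 : ℂ)
            + Matrix.single (1 : Fin 2) (0 : Fin 2) (1 : ℂ))))).trace
        = (((ctil l).re : ℝ) : ℂ) / ((Δ : ℂ) * (γsq : ℂ)) :=
  blockEncoded_resourceState_decoding_general d M hd Hm hherm hortho ctil Δ Htil hHtil γsq ρtil hρ
end
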